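/- Let n, m ≥ 1 and α, β > 0. Suppose s_{t₁,t₂} satisfies the bi-parameter Hölder condition: |s_{t₁,t₂}(x,y) − s_{t₁,t₂}(x,(y₁,y₂')) − s_{t₁,t₂}(x,(y₁',y₂)) + s_{t₁,t₂}(x,(y₁',y₂'))| ≤ C₀ |y₁−y₁'|^α/(t₁+|x₁−y₁|)^{n+α} · |y₂−y₂'|^β/(t₂+|x₂−y₂|)^{m+β} whenever |y₁−y₁'| < t₁/2 and |y₂−y₂'| < t₂/2. Let a be supported in I×J (cubes with centers z₁, z₂, side lengths l_I, l_J) with ∫_I a(y₁,y₂)dy₁ = 0 for all y₂ and ∫_J a(y₁,y₂)dy₂ = 0 for all y₁, and ‖a‖_{L¹} ≤ 1. Then for all x = (x₁,x₂) with x₁ ∉ γI, x₂ ∉ γJ (γ ≥ 2) and all (t₁,t₂) with t₁ ≥ |x₁−z₁| and t₂ ≥ |x₂−z₂|: |θ_{t₁,t₂}a(x)| ≤ C C₀ l_I^α l_J^β t₁^{-n-α} t₂^{-m-β}, where θ_{t₁,t₂}a(x) = ∫∫ s_{t₁,t₂}(x,y)a(y)dy and C depends only on n, m, α, β. -/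

import Mathlib

/-!
Write `σ = s_{t₁,t₂}(x, ·)`. On `I × J` the rectangle difference
`σ(y₁, y₂) - σ(y₁, z₂) - σ(z₁, y₂) + σ(z₁, z₂)` is at most
`n m C₀ l_I^α l_J^β t₁^(-n-α) t₂^(-m-β)`: as `x₁ ∉ γI`, `t₁ ≥ |x₁ - z₁| > l_I`, so `y₁` is joined
to `z₁` by `n` steps of length at most `l_I / 2 < t₁ / 2`; likewise in the second variable, and
the Hölder condition applies to each of the `n m` small rectangles. So on the support of `a` the
kernel is within that bound of a sum `f(y₁) + g(y₂)`, and the two cancellations of `a` kill the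
sum. Since `s` is not assumed measurable, `f` and `g` are first replaced by measurable `c` and `d`,
glued from countably many sections of the support of `a`; this triples the error.
-/

open MeasureTheory Real Set

noncomputable section

/-- The axis-parallel cube with center `z` and side length `l`. -/
def cube {n : ℕ} (z : EuclideanSpace ℝ (Fin n)) (l : ℝ) : Set (EuclideanSpace ℝ (Fin n)) :=
  {y | ∀ i, |y i - z i| ≤ l / 2}

open Filter Topology

section Chain

variable {V W E : Type*} [NormedAddCommGroup V] [NormedSpace ℝ V] [NormedAddCommGroup W]
  [NormedSpace ℝ W] [NormedAddCommGroup E]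

theorem norm_sub_le_of_chain (h : V → E) {δ B : ℝ}
    (hloc : ∀ v v', ‖v - v'‖ ≤ δ → ‖h v - h v'‖ ≤ B) (N : ℕ) {y y' : V}
    (hy : ‖y - y'‖ ≤ N * δ) : ‖h y - h y'‖ ≤ N * B := by
  rcases N.eq_zero_or_pos with rfl | hN
  · simp_all [sub_eq_zero]
  have hN' : (N : ℝ) ≠ 0 := by positivity
  set p : ℕ → V := fun i => y' + ((i : ℝ) / N) • (y - y')
  have hstep : ∀ i, ‖p (i + 1) - p i‖ ≤ δ := by
    intro i
    have : p (i + 1) - p i = (N : ℝ)⁻¹ • (y - y') := by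
      simp only [p, add_sub_add_left_eq_sub, ← sub_smul]
      congr 1
      push_cast
      ring
    rw [this, norm_smul, norm_inv, norm_natCast, inv_mul_le_iff₀ (by positivity)]
    exact hy
  calc ‖h y - h y'‖ = ‖∑ i ∈ Finset.range N, (h (p (i + 1)) - h (p i))‖ := by
        rw [Finset.sum_range_sub (fun i => h (p i))]
        simp [p, hN']
    _ ≤ ∑ _i ∈ Finset.range N, B := norm_sum_le_of_le _ fun i _ => hloc _ _ (hstep i)
    _ = N * B := by simp

theorem norm_rect_sub_le_of_chain (σ : V → W → E) {δ₁ δ₂ B : ℝ}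
    (hloc : ∀ v v' w w', ‖v - v'‖ ≤ δ₁ → ‖w - w'‖ ≤ δ₂ →
      ‖σ v w - σ v w' - σ v' w + σ v' w'‖ ≤ B)
    (N K : ℕ) {y₁ y₁' : V} {y₂ y₂' : W} (h₁ : ‖y₁ - y₁'‖ ≤ N * δ₁) (h₂ : ‖y₂ - y₂'‖ ≤ K * δ₂) :
    ‖σ y₁ y₂ - σ y₁ y₂' - σ y₁' y₂ + σ y₁' y₂'‖ ≤ N * (K * B) := by
  have hcol : ∀ v v', ‖v - v'‖ ≤ δ₁ → ‖(σ v y₂ - σ v y₂') - (σ v' y₂ - σ v' y₂')‖ ≤ K * B := by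
    intro v v' hv
    have := norm_sub_le_of_chain (fun w => σ v w - σ v' w)
      (fun w w' hw => by convert hloc v v' w w' hv hw using 2; abel) K h₂
    convert this using 2
    abel
  convert norm_sub_le_of_chain (fun v => σ v y₂ - σ v y₂') hcol N h₁ using 2
  abel

end Chain

def clampReIm (R : ℝ) (w : ℂ) : ℂ :=
  ((max (-R) (min w.re R) : ℝ) : ℂ) + ((max (-R) (min w.im R) : ℝ) : ℂ) * Complex.I

section Clamp

variable {R : ℝ}

theorem abs_add_sub_clamp_le (hR : 0 ≤ R) (r s : ℝ) :
    |r + s - (max (-R) (min r R) + max (-R) (min s R))| ≤ |r + s| := by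
  rw [abs_le]
  constructor <;> cases abs_cases (r + s) <;> grind

theorem clampReIm_re (R : ℝ) (w : ℂ) : (clampReIm R w).re = max (-R) (min w.re R) := by
  simp [clampReIm]

theorem clampReIm_im (R : ℝ) (w : ℂ) : (clampReIm R w).im = max (-R) (min w.im R) := by
  simp [clampReIm]

theorem measurable_clampReIm (R : ℝ) : Measurable (clampReIm R) := by
  unfold clampReIm
  fun_prop

theorem norm_clampReIm_le (hR : 0 ≤ R) (w : ℂ) : ‖clampReIm R w‖ ≤ 2 * R := by
  have h : ∀ r : ℝ, |max (-R) (min r R)| ≤ R := fun r => abs_le.2 ⟨le_max_left _ _, by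
    simp [hR]⟩
  calc ‖clampReIm R w‖ ≤ |(clampReIm R w).re| + |(clampReIm R w).im| :=
        Complex.norm_le_abs_re_add_abs_im _
    _ ≤ R + R := by rw [clampReIm_re, clampReIm_im]; exact add_le_add (h _) (h _)
    _ = 2 * R := by ring

theorem clampReIm_of_norm_le {w : ℂ} (h : ‖w‖ ≤ R) : clampReIm R w = w := by
  have h' : ∀ r : ℝ, |r| ≤ R → max (-R) (min r R) = r := fun r hr => by
    rw [abs_le] at hr
    rw [min_eq_left hr.2, max_eq_right hr.1]
  apply Complex.ext
  · rw [clampReIm_re, h' _ ((Complex.abs_re_le_norm w).trans h)]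
  · rw [clampReIm_im, h' _ ((Complex.abs_im_le_norm w).trans h)]

theorem norm_add_sub_clampReIm_le (hR : 0 ≤ R) (v w : ℂ) :
    ‖v + w - (clampReIm R v + clampReIm R w)‖ ≤ 2 * ‖v + w‖ := by
  calc ‖v + w - (clampReIm R v + clampReIm R w)‖
      ≤ |(v + w - (clampReIm R v + clampReIm R w)).re|
          + |(v + w - (clampReIm R v + clampReIm R w)).im| :=
        Complex.norm_le_abs_re_add_abs_im _
    _ ≤ |(v + w).re| + |(v + w).im| := by
        simp only [Complex.sub_re, Complex.sub_im, Complex.add_re, Complex.add_im, clampReIm_re,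
          clampReIm_im]
        exact add_le_add (abs_add_sub_clamp_le hR _ _) (abs_add_sub_clamp_le hR _ _)
    _ ≤ 2 * ‖v + w‖ := by
        linarith [Complex.abs_re_le_norm (v + w), Complex.abs_im_le_norm (v + w)]

end Clamp

section Approximation

variable {X Y : Type*} [MeasurableSpace X]

theorem exists_seq_ae_subset_iUnion (μ : Measure X) [SFinite μ] [Nonempty Y] {S : Y → Set X}
    (hS : ∀ y, MeasurableSet (S y)) : ∃ Q : ℕ → Y, ∀ y, S y ≤ᵐ[μ] ⋃ k, S (Q k) := by
  obtain ⟨D, hDS, hDc, hD⟩ :=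
    Measure.exists_ae_subset_biUnion_countable μ (C := range S) (by rintro _ ⟨y, rfl⟩; exact hS y)
  obtain ⟨e, he⟩ := (hDc.insert (S (Classical.arbitrary Y))).exists_eq_range (insert_nonempty _ _)
  have hQ : ∀ k, ∃ y, S y = e k := fun k =>
    insert_subset (mem_range_self _) hDS (he ▸ mem_range_self k)
  choose Q hQ using hQ
  refine ⟨Q, fun y => (hD _ (mem_range_self y)).trans (Eventually.of_forall ?_)⟩
  rintro x ⟨s, hs, hxs⟩
  obtain ⟨k, rfl⟩ : s ∈ range e := he ▸ mem_insert_of_mem _ hs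
  exact mem_iUnion.2 ⟨k, hQ k ▸ hxs⟩

theorem exists_measurable_dist_le_of_forall_mem {E : Type*} [PseudoMetricSpace E]
    [MeasurableSpace E] (μ : Measure X) [SFinite μ] [Nonempty Y] {S : Y → Set X}
    (hS : ∀ y, MeasurableSet (S y)) {v : Y → X → E} (hv : ∀ y, Measurable (v y)) {f : X → E}
    {M : ℝ} (hvf : ∀ y, ∀ x ∈ S y, dist (v y x) (f x) ≤ M) :
    ∃ c : X → E, Measurable c ∧ ∃ U, MeasurableSet U ∧ (∀ x ∈ U, dist (c x) (f x) ≤ M) ∧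
      ∀ y, S y ≤ᵐ[μ] U := by
  classical
  obtain ⟨Q, hQ⟩ := exists_seq_ae_subset_iUnion μ hS
  set U := ⋃ k, S (Q k)
  have hex : ∀ x, ∃ k, x ∈ S (Q k) ∨ x ∉ U := fun x => by
    by_cases hx : x ∈ U
    · exact (mem_iUnion.1 hx).imp fun _ => Or.inl
    · exact ⟨0, Or.inr hx⟩
  have hU : MeasurableSet U := .iUnion fun k => hS (Q k)
  refine ⟨fun x => v (Q (Nat.find (hex x))) x,
    Measurable.find (p := fun k x => x ∈ S (Q k) ∨ x ∉ U) (fun k => hv (Q k))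
      (fun k => (hS (Q k)).union hU.compl) hex,
    U, hU, fun x hx => hvf _ _ ((Nat.find_spec (hex x)).resolve_right (not_not.2 hx)), hQ⟩

theorem exists_measurable_eq_on_support {Z : Type*} [MeasurableSpace Z] {ρ : Measure Z}
    {a κ : Z → ℂ} (ha : AEStronglyMeasurable a ρ)
    (hκa : AEStronglyMeasurable (fun z => κ z * a z) ρ) :
    ∃ Ω, MeasurableSet Ω ∧ ∃ u : Z → ℂ, Measurable u ∧ (∀ z ∈ Ω, a z ≠ 0 ∧ u z = κ z) ∧
      ∀ᵐ z ∂ρ, a z ≠ 0 → z ∈ Ω := by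
  set N := toMeasurable ρ {z | ¬(a z = ha.mk a z ∧ κ z * a z = hκa.mk _ z)}
  have hN : ρ N = 0 := by
    rw [measure_toMeasurable]
    exact ae_iff.1 (ha.ae_eq_mk.and hκa.ae_eq_mk)
  refine ⟨{z | ha.mk a z ≠ 0} \ N,
    (ha.stronglyMeasurable_mk.measurable (measurableSet_singleton 0).compl).diff
      (measurableSet_toMeasurable _ _),
    fun z => hκa.mk _ z / ha.mk a z,
    hκa.stronglyMeasurable_mk.measurable.div ha.stronglyMeasurable_mk.measurable, ?_, ?_⟩
  · rintro z ⟨hz, hzN⟩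
    obtain ⟨haz, hκaz⟩ := not_not.1 fun h => hzN (subset_toMeasurable _ _ h)
    have hz : a z ≠ 0 := haz ▸ hz
    exact ⟨hz, by simp only [← hκaz, ← haz, mul_div_cancel_right₀ _ hz]⟩
  · filter_upwards [ha.ae_eq_mk, measure_eq_zero_iff_ae_notMem.1 hN] with z hz hzN haz
    exact ⟨show ha.mk a z ≠ 0 from hz ▸ haz, hzN⟩

end Approximation

section ProductMeasure

variable {X Y : Type*} [MeasurableSpace X] [MeasurableSpace Y] {μ : Measure X} {ν : Measure Y}
  [SFinite μ] [SFinite ν]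

theorem integral_comp_fst_mul_eq_zero {φ : X → ℂ} {b : X × Y → ℂ}
    (hφb : Integrable (fun p => φ p.1 * b p) (μ.prod ν)) (hb : ∀ᵐ x ∂μ, ∫ y, b (x, y) ∂ν = 0) :
    ∫ p, φ p.1 * b p ∂(μ.prod ν) = 0 := by
  rw [integral_prod _ hφb]
  refine integral_eq_zero_of_ae ?_
  filter_upwards [hb] with x hx
  simp [integral_const_mul, hx]

theorem integral_comp_snd_mul_eq_zero {ψ : Y → ℂ} {b : X × Y → ℂ}
    (hψb : Integrable (fun p => ψ p.2 * b p) (μ.prod ν)) (hb : ∀ᵐ y ∂ν, ∫ x, b (x, y) ∂μ = 0) :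
    ∫ p, ψ p.2 * b p ∂(μ.prod ν) = 0 := by
  rw [integral_prod_symm _ hψb]
  refine integral_eq_zero_of_ae ?_
  filter_upwards [hb] with y hy
  simp [integral_const_mul, hy]

variable {c : X → ℂ} {d : Y → ℂ} {b : X × Y → ℂ}

theorem integral_clampReIm_add_mul_eq_zero {R : ℝ} (hR : 0 ≤ R) (hc : Measurable c)
    (hd : Measurable d) (hb : Integrable b (μ.prod ν)) (h₁ : ∀ᵐ x ∂μ, ∫ y, b (x, y) ∂ν = 0)
    (h₂ : ∀ᵐ y ∂ν, ∫ x, b (x, y) ∂μ = 0) :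
    ∫ p, (clampReIm R (c p.1) + clampReIm R (d p.2)) * b p ∂(μ.prod ν) = 0 := by
  have hc' : Integrable (fun p => clampReIm R (c p.1) * b p) (μ.prod ν) :=
    hb.bdd_mul ((measurable_clampReIm R).comp (hc.comp measurable_fst)).aestronglyMeasurable
      (ae_of_all _ fun p => norm_clampReIm_le hR _)
  have hd' : Integrable (fun p => clampReIm R (d p.2) * b p) (μ.prod ν) :=
    hb.bdd_mul ((measurable_clampReIm R).comp (hd.comp measurable_snd)).aestronglyMeasurable
      (ae_of_all _ fun p => norm_clampReIm_le hR _)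
  simp only [add_mul]
  rw [integral_add hc' hd',
    integral_comp_fst_mul_eq_zero (φ := fun x => clampReIm R (c x)) hc' h₁,
    integral_comp_snd_mul_eq_zero (ψ := fun y => clampReIm R (d y)) hd' h₂, add_zero]

/-- `c b` and `d b` need not be integrable, so `c` and `d` are clamped; the clamping error is
dominated by `2 ‖c + d‖` even where `c` and `d` are both large. -/
theorem integral_add_mul_eq_zero (hc : Measurable c) (hd : Measurable d)
    (hb : Integrable b (μ.prod ν)) (h₁ : ∀ᵐ x ∂μ, ∫ y, b (x, y) ∂ν = 0)
    (h₂ : ∀ᵐ y ∂ν, ∫ x, b (x, y) ∂μ = 0)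
    (hk : Integrable (fun p => (c p.1 + d p.2) * b p) (μ.prod ν)) :
    ∫ p, (c p.1 + d p.2) * b p ∂(μ.prod ν) = 0 := by
  set F : ℕ → X × Y → ℂ := fun j p => (clampReIm j (c p.1) + clampReIm j (d p.2)) * b p
  have hlim : Tendsto (fun j => ∫ p, F j p ∂(μ.prod ν)) atTop
      (𝓝 (∫ p, (c p.1 + d p.2) * b p ∂(μ.prod ν))) := by
    refine tendsto_integral_of_dominated_convergence (fun p => 3 * ‖(c p.1 + d p.2) * b p‖)
      (fun j => ?_) (hk.norm.const_mul 3) (fun j => ae_of_all _ fun p => ?_)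
      (ae_of_all _ fun p => ?_)
    · exact ((((measurable_clampReIm _).comp (hc.comp measurable_fst)).add
        ((measurable_clampReIm _).comp (hd.comp measurable_snd))).aestronglyMeasurable).mul hb.1
    · set S := c p.1 + d p.2
      set A := clampReIm j (c p.1) + clampReIm j (d p.2)
      have hA : ‖A‖ ≤ 3 * ‖S‖ :=
        calc ‖A‖ = ‖S - (S - A)‖ := by rw [sub_sub_cancel]
          _ ≤ ‖S‖ + ‖S - A‖ := norm_sub_le _ _
          _ ≤ 3 * ‖S‖ := by
            linarith [norm_add_sub_clampReIm_le (Nat.cast_nonneg j) (c p.1) (d p.2)]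
      simp only [F, norm_mul, ← mul_assoc]
      exact mul_le_mul_of_nonneg_right hA (norm_nonneg _)
    · refine tendsto_const_nhds.congr' ?_
      filter_upwards [eventually_ge_atTop ⌈max ‖c p.1‖ ‖d p.2‖⌉₊] with j hj
      have hj' := Nat.ceil_le.1 hj
      simp only [F, clampReIm_of_norm_le ((le_max_left _ _).trans hj'),
        clampReIm_of_norm_le ((le_max_right _ _).trans hj')]
  have hF : ∀ j, ∫ p, F j p ∂(μ.prod ν) = 0 := fun j =>
    integral_clampReIm_add_mul_eq_zero (Nat.cast_nonneg j) hc hd hb h₁ h₂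
  exact tendsto_nhds_unique hlim (tendsto_const_nhds.congr fun j => (hF j).symm)

theorem exists_measurable_add_approx [Nonempty X] [Nonempty Y] {E : Type*}
    [NormedAddCommGroup E] [MeasurableSpace E] [MeasurableSub E] {Ω : Set (X × Y)}
    (hΩ : MeasurableSet Ω) {u : X × Y → E} (hu : Measurable u) {f : X → E} {g : Y → E} {M : ℝ}
    (h : ∀ p ∈ Ω, ‖u p - (f p.1 + g p.2)‖ ≤ M) :
    ∃ c : X → E, ∃ d : Y → E, Measurable c ∧ Measurable d ∧
      ∀ᵐ p ∂(μ.prod ν), p ∈ Ω → ‖u p - (c p.1 + d p.2)‖ ≤ 3 * M := by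
  obtain ⟨c, hc, U, hU, hcf, hcU⟩ := exists_measurable_dist_le_of_forall_mem μ
    (S := fun y => {x | (x, y) ∈ Ω}) (fun y => measurable_prodMk_right hΩ)
    (v := fun y x => u (x, y) - g y) (fun y => (hu.comp measurable_prodMk_right).sub_const _)
    (f := f) (M := M) fun y x hx => by
      rw [dist_eq_norm, sub_sub, add_comm]; exact h _ hx
  obtain ⟨d, hd, V, hV, hdg, hdV⟩ := exists_measurable_dist_le_of_forall_mem ν
    (S := fun x => {y | (x, y) ∈ Ω}) (fun x => measurable_prodMk_left hΩ)
    (v := fun x y => u (x, y) - f x) (fun x => (hu.comp measurable_prodMk_left).sub_const _)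
    (f := g) (M := M) fun x y hy => by
      rw [dist_eq_norm, sub_sub]; exact h _ hy
  have hΩU : MeasurableSet {p : X × Y | p ∈ Ω → p.1 ∈ U} := hΩ.imp (measurable_fst hU)
  have hΩV : MeasurableSet {p : X × Y | p ∈ Ω → p.2 ∈ V} := hΩ.imp (measurable_snd hV)
  have hfst : ∀ᵐ p ∂(μ.prod ν), p ∈ Ω → p.1 ∈ U :=
    (Measure.ae_prod_iff_ae_ae hΩU).2
      ((Measure.ae_ae_comm (p := fun x y => (x, y) ∈ Ω → x ∈ U) hΩU).2 (.of_forall hcU))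
  have hsnd : ∀ᵐ p ∂(μ.prod ν), p ∈ Ω → p.2 ∈ V :=
    (Measure.ae_prod_iff_ae_ae hΩV).2 (.of_forall hdV)
  refine ⟨c, d, hc, hd, ?_⟩
  filter_upwards [hfst, hsnd] with p hpU hpV hp
  have hc' := hcf _ (hpU hp)
  have hd' := hdg _ (hpV hp)
  rw [dist_eq_norm] at hc' hd'
  calc ‖u p - (c p.1 + d p.2)‖
      = ‖(u p - (f p.1 + g p.2)) + (f p.1 - c p.1) + (g p.2 - d p.2)‖ := by congr 1; abel
    _ ≤ ‖u p - (f p.1 + g p.2)‖ + ‖f p.1 - c p.1‖ + ‖g p.2 - d p.2‖ := norm_add₃_le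
    _ ≤ 3 * M := by rw [norm_sub_rev (f _), norm_sub_rev (g _)]; linarith [h p hp]

theorem norm_integral_mul_le_of_near_add [Nonempty X] [Nonempty Y] {a : X × Y → ℂ}
    (ha : Integrable a (μ.prod ν)) (h₁ : ∀ᵐ x ∂μ, ∫ y, a (x, y) ∂ν = 0)
    (h₂ : ∀ᵐ y ∂ν, ∫ x, a (x, y) ∂μ = 0) {κ : X × Y → ℂ} {f : X → ℂ} {g : Y → ℂ} {M : ℝ}
    (hM : 0 ≤ M) (hκ : ∀ p, a p ≠ 0 → ‖κ p - (f p.1 + g p.2)‖ ≤ M) :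
    ‖∫ p, κ p * a p ∂(μ.prod ν)‖ ≤ 3 * M * ∫ p, ‖a p‖ ∂(μ.prod ν) := by
  by_cases hκa : Integrable (fun p => κ p * a p) (μ.prod ν)
  swap
  · rw [integral_undef hκa, norm_zero]
    exact mul_nonneg (by positivity) (integral_nonneg fun _ => norm_nonneg _)
  obtain ⟨Ω, hΩ, u, hu, hΩu, hΩae⟩ := exists_measurable_eq_on_support ha.1 hκa.1
  obtain ⟨c, d, hc, hd, hcd⟩ := exists_measurable_add_approx (μ := μ) (ν := ν) hΩ hu
    (f := f) (g := g) fun p hp => (hΩu p hp).2 ▸ hκ p (hΩu p hp).1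
  set r := fun p => κ p * a p - (c p.1 + d p.2) * a p
  have hr_le : ∀ᵐ p ∂(μ.prod ν), ‖r p‖ ≤ 3 * M * ‖a p‖ := by
    filter_upwards [hcd, hΩae] with p hcdp hΩp
    rcases eq_or_ne (a p) 0 with h0 | h0
    · simp [r, h0]
    · have hp := hΩp h0
      rw [show r p = (u p - (c p.1 + d p.2)) * a p by simp only [r, (hΩu p hp).2]; ring,
        norm_mul]
      exact mul_le_mul_of_nonneg_right (hcdp hp) (norm_nonneg _)
  have hr : Integrable r (μ.prod ν) := (ha.norm.const_mul _).mono' (hκa.1.sub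
    ((((hc.comp measurable_fst).add (hd.comp measurable_snd)).aestronglyMeasurable).mul ha.1))
    hr_le
  have hk : Integrable (fun p => (c p.1 + d p.2) * a p) (μ.prod ν) :=
    (hκa.sub hr).congr (ae_of_all _ fun p => by simp [r])
  have hκa_eq : ∫ p, κ p * a p ∂(μ.prod ν) = ∫ p, r p ∂(μ.prod ν) := by
    rw [integral_sub hκa hk, integral_add_mul_eq_zero hc hd ha h₁ h₂ hk, sub_zero]
  calc ‖∫ p, κ p * a p ∂(μ.prod ν)‖ = ‖∫ p, r p ∂(μ.prod ν)‖ := by rw [hκa_eq]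
    _ ≤ ∫ p, 3 * M * ‖a p‖ ∂(μ.prod ν) :=
        norm_integral_le_of_norm_le (ha.norm.const_mul _) hr_le
    _ = 3 * M * ∫ p, ‖a p‖ ∂(μ.prod ν) := integral_const_mul _ _

end ProductMeasure

section Cube

variable {n : ℕ}

theorem norm_le_mul_of_forall_abs_apply_le {v : EuclideanSpace ℝ (Fin n)} {r : ℝ}
    (h : ∀ i, |v i| ≤ r) : ‖v‖ ≤ n * r :=
  calc ‖v‖ = ‖∑ i, EuclideanSpace.single i (v i)‖ := by
        congr 1
        ext i
        simp
    _ ≤ ∑ i, ‖EuclideanSpace.single i (v i)‖ := norm_sum_le _ _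
    _ ≤ ∑ _i : Fin n, r := Finset.sum_le_sum fun i _ => by simpa using h i
    _ = n * r := by simp

theorem norm_sub_le_of_mem_cube {z y : EuclideanSpace ℝ (Fin n)} {l : ℝ} (hy : y ∈ cube z l) :
    ‖y - z‖ ≤ n * (l / 2) :=
  norm_le_mul_of_forall_abs_apply_le fun i => by simpa using hy i

theorem lt_norm_sub_of_notMem_cube {z x : EuclideanSpace ℝ (Fin n)} {l γ : ℝ} (hl : 0 < l)
    (hγ : 2 ≤ γ) (hx : x ∉ cube z (γ * l)) : l < ‖x - z‖ := by
  simp only [cube, mem_ofPred_eq, not_forall, not_le] at hx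
  obtain ⟨i, hi⟩ := hx
  calc l ≤ γ * l / 2 := by nlinarith
    _ < |x i - z i| := hi
    _ ≤ ‖x - z‖ := by simpa using PiLp.norm_apply_le (x - z) i

end Cube

theorem rpow_div_add_rpow_le {α d δ l t r : ℝ} (hα : 0 ≤ α) (hd : 0 ≤ d) (hδ : 0 ≤ δ)
    (hδl : δ ≤ l) (ht : 0 < t) (hr : 0 ≤ r) :
    δ ^ α / (t + r) ^ (d + α) ≤ l ^ α * t ^ (-d - α) := by
  have hl : 0 ≤ l := hδ.trans hδl
  rw [show -d - α = -(d + α) by ring, rpow_neg ht.le, ← div_eq_mul_inv]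
  gcongr
  linarith

section BiHolder

variable {V W E : Type*} [NormedAddCommGroup V] [NormedSpace ℝ V] [NormedAddCommGroup W]
  [NormedSpace ℝ W] [NormedAddCommGroup E]

/-- The bi-parameter Hölder condition of the paper for `σ = s_{t₁,t₂}(x, ·)`, `x = (x₁, x₂)`. -/
def IsBiHolderAt (C₀ α β d₁ d₂ t₁ t₂ : ℝ) (x₁ : V) (x₂ : W) (σ : V → W → E) : Prop :=
  ∀ y₁ y₁' y₂ y₂', ‖y₁ - y₁'‖ < t₁ / 2 → ‖y₂ - y₂'‖ < t₂ / 2 →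
    ‖σ y₁ y₂ - σ y₁ y₂' - σ y₁' y₂ + σ y₁' y₂'‖ ≤
      C₀ * (‖y₁ - y₁'‖ ^ α / (t₁ + ‖x₁ - y₁‖) ^ (d₁ + α)) *
        (‖y₂ - y₂'‖ ^ β / (t₂ + ‖x₂ - y₂‖) ^ (d₂ + β))

variable {C₀ α β d₁ d₂ t₁ t₂ : ℝ} {x₁ : V} {x₂ : W} {σ : V → W → E}

theorem IsBiHolderAt.nonneg [NontrivialTopology V] [NontrivialTopology W]
    (hσ : IsBiHolderAt C₀ α β d₁ d₂ t₁ t₂ x₁ x₂ σ) (ht₁ : 0 < t₁) (ht₂ : 0 < t₂) : 0 ≤ C₀ := by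
  obtain ⟨v, hv⟩ := exists_norm_eq V (c := t₁ / 4) (by positivity)
  obtain ⟨w, hw⟩ := exists_norm_eq W (c := t₂ / 4) (by positivity)
  have h := (norm_nonneg _).trans
    (hσ v 0 w 0 (by rw [sub_zero, hv]; linarith) (by rw [sub_zero, hw]; linarith))
  rw [sub_zero, sub_zero, hv, hw, mul_assoc] at h
  exact nonneg_of_mul_nonneg_left h (by positivity)

end BiHolder

theorem IsBiHolderAt.norm_rect_sub_le_of_mem_cube {n m : ℕ} {E : Type*} [NormedAddCommGroup E]
    {C₀ α β d₁ d₂ t₁ t₂ : ℝ} {x₁ : EuclideanSpace ℝ (Fin n)} {x₂ : EuclideanSpace ℝ (Fin m)}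
    {σ : EuclideanSpace ℝ (Fin n) → EuclideanSpace ℝ (Fin m) → E}
    (hσ : IsBiHolderAt C₀ α β d₁ d₂ t₁ t₂ x₁ x₂ σ) (hα : 0 < α) (hβ : 0 < β) (hC₀ : 0 ≤ C₀)
    (hd₁ : 0 ≤ d₁) (hd₂ : 0 ≤ d₂) {lI lJ : ℝ} (hlI : 0 < lI) (hlJ : 0 < lJ) (hlt₁ : lI < t₁)
    (hlt₂ : lJ < t₂) {z₁ y₁ : EuclideanSpace ℝ (Fin n)} {z₂ y₂ : EuclideanSpace ℝ (Fin m)}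
    (hy₁ : y₁ ∈ cube z₁ lI) (hy₂ : y₂ ∈ cube z₂ lJ) :
    ‖σ y₁ y₂ - σ y₁ z₂ - σ z₁ y₂ + σ z₁ z₂‖ ≤
      n * (m * (C₀ * (lI ^ α * t₁ ^ (-d₁ - α)) * (lJ ^ β * t₂ ^ (-d₂ - β)))) := by
  refine norm_rect_sub_le_of_chain σ (fun v v' w w' hv hw => ?_) n m
    (norm_sub_le_of_mem_cube hy₁) (norm_sub_le_of_mem_cube hy₂)
  refine (hσ v v' w w' (by linarith) (by linarith)).trans ?_
  have ht₁ : 0 < t₁ := hlI.trans hlt₁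
  have ht₂ : 0 < t₂ := hlJ.trans hlt₂
  exact mul_le_mul (mul_le_mul_of_nonneg_left (rpow_div_add_rpow_le hα.le hd₁ (norm_nonneg _)
      (by linarith) ht₁ (norm_nonneg _)) hC₀)
    (rpow_div_add_rpow_le hβ.le hd₂ (norm_nonneg _) (by linarith) ht₂ (norm_nonneg _))
    (by positivity) (by positivity)

theorem stmt16 (n m : ℕ) (hn : 1 ≤ n) (hm : 1 ≤ m) (α β : ℝ) (hα : 0 < α) (hβ : 0 < β) :
    ∃ C > 0, ∀ (C₀ : ℝ)
      (s : ℝ → ℝ → (EuclideanSpace ℝ (Fin n) × EuclideanSpace ℝ (Fin m)) →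
        EuclideanSpace ℝ (Fin n) → EuclideanSpace ℝ (Fin m) → ℂ),
      -- bi-parameter Hölder condition
      (∀ t₁ t₂ : ℝ, 0 < t₁ → 0 < t₂ →
        ∀ (x : EuclideanSpace ℝ (Fin n) × EuclideanSpace ℝ (Fin m))
          (y₁ y₁' : EuclideanSpace ℝ (Fin n)) (y₂ y₂' : EuclideanSpace ℝ (Fin m)),
        ‖y₁ - y₁'‖ < t₁ / 2 → ‖y₂ - y₂'‖ < t₂ / 2 →
        ‖s t₁ t₂ x y₁ y₂ - s t₁ t₂ x y₁ y₂' - s t₁ t₂ x y₁' y₂ + s t₁ t₂ x y₁' y₂'‖ ≤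
          C₀ * (‖y₁ - y₁'‖ ^ α / (t₁ + ‖x.1 - y₁‖) ^ ((n : ℝ) + α)) *
            (‖y₂ - y₂'‖ ^ β / (t₂ + ‖x.2 - y₂‖) ^ ((m : ℝ) + β))) →
      ∀ (lI lJ : ℝ), 0 < lI → 0 < lJ →
      ∀ (z₁ : EuclideanSpace ℝ (Fin n)) (z₂ : EuclideanSpace ℝ (Fin m))
        (a : (EuclideanSpace ℝ (Fin n) × EuclideanSpace ℝ (Fin m)) → ℂ),
      Integrable a →
      -- support in I × J
      (∀ y : EuclideanSpace ℝ (Fin n) × EuclideanSpace ℝ (Fin m),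
        y.1 ∉ cube z₁ lI ∨ y.2 ∉ cube z₂ lJ → a y = 0) →
      -- cancellation in each variable
      (∀ y₂ : EuclideanSpace ℝ (Fin m), (∫ y₁, a (y₁, y₂)) = 0) →
      (∀ y₁ : EuclideanSpace ℝ (Fin n), (∫ y₂, a (y₁, y₂)) = 0) →
      -- L¹ normalization
      (∫ y, ‖a y‖) ≤ 1 →
      ∀ γ : ℝ, 2 ≤ γ →
      ∀ (x : EuclideanSpace ℝ (Fin n) × EuclideanSpace ℝ (Fin m)) (t₁ t₂ : ℝ),
        x.1 ∉ cube z₁ (γ * lI) → x.2 ∉ cube z₂ (γ * lJ) →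
        ‖x.1 - z₁‖ ≤ t₁ → ‖x.2 - z₂‖ ≤ t₂ →
        ‖∫ y, s t₁ t₂ x y.1 y.2 * a y‖ ≤
          C * C₀ * lI ^ α * lJ ^ β * t₁ ^ (-(n : ℝ) - α) * t₂ ^ (-(m : ℝ) - β) := by
  refine ⟨3 * n * m, by positivity, ?_⟩
  intro C₀ s hs lI lJ hlI hlJ z₁ z₂ a ha hsupp hcan₁ hcan₂ hnorm γ hγ x t₁ t₂ hx₁ hx₂ ht₁ ht₂
  have hlt₁ : lI < t₁ := (lt_norm_sub_of_notMem_cube hlI hγ hx₁).trans_le ht₁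
  have hlt₂ : lJ < t₂ := (lt_norm_sub_of_notMem_cube hlJ hγ hx₂).trans_le ht₂
  have ht₁pos : 0 < t₁ := hlI.trans hlt₁
  have ht₂pos : 0 < t₂ := hlJ.trans hlt₂
  have hσ : IsBiHolderAt C₀ α β n m t₁ t₂ x.1 x.2 (s t₁ t₂ x) := hs t₁ t₂ ht₁pos ht₂pos x
  have : Nonempty (Fin n) := ⟨⟨0, hn⟩⟩
  have : Nonempty (Fin m) := ⟨⟨0, hm⟩⟩
  have hC₀ : 0 ≤ C₀ := hσ.nonneg ht₁pos ht₂pos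
  have hnear : ∀ y, a y ≠ 0 →
      ‖s t₁ t₂ x y.1 y.2 - (s t₁ t₂ x y.1 z₂ + (s t₁ t₂ x z₁ y.2 - s t₁ t₂ x z₁ z₂))‖ ≤
        n * (m * (C₀ * (lI ^ α * t₁ ^ (-(n : ℝ) - α)) * (lJ ^ β * t₂ ^ (-(m : ℝ) - β)))) := by
    intro y hy
    obtain ⟨hy₁, hy₂⟩ : y.1 ∈ cube z₁ lI ∧ y.2 ∈ cube z₂ lJ := by
      simpa only [not_or, not_not] using mt (hsupp y) hy
    rw [sub_add_eq_sub_sub, ← sub_add]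
    exact hσ.norm_rect_sub_le_of_mem_cube hα hβ hC₀ n.cast_nonneg m.cast_nonneg hlI hlJ hlt₁
      hlt₂ hy₁ hy₂
  calc ‖∫ y, s t₁ t₂ x y.1 y.2 * a y‖ ≤ 3 * _ * ∫ y, ‖a y‖ :=
        norm_integral_mul_le_of_near_add (κ := fun y => s t₁ t₂ x y.1 y.2)
          (f := fun y₁ => s t₁ t₂ x y₁ z₂) (g := fun y₂ => s t₁ t₂ x z₁ y₂ - s t₁ t₂ x z₁ z₂)
          ha (ae_of_all _ hcan₂) (ae_of_all _ hcan₁) (by positivity) hnear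
    _ ≤ 3 * _ * 1 := by gcongr
    _ = _ := by ring
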